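/- Let {γ_j}_{j≥1} be independent random variables with P(γ_j = k) = (1 − q^j) q^{jk} for k = 0, 1, 2, ..., where 0 < q < 1 is fixed. Then for a uniformly random partition λ of n with multiplicities α_j, and any nonnegative integers m₁, ..., m_n with ∑ j·m_j = n, one has P(α_j = m_j for all j ≤ n) = P(γ_j = m_j for all j ≤ n | ∑_{j≥1} j·γ_j = n). -/
import Mathlib

open scoped Classical
open Finset

private lemma aux_sum_Icc_fin {M : Type*} [AddCommMonoid M] (n : ℕ) (F : ℕ → M) :
    ∑ j ∈ Icc 1 n, F j = ∑ i : Fin n, F ((i : ℕ) + 1) := by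
  rw [← Finset.Ico_add_one_right_eq_Icc, Finset.sum_Ico_eq_sum_range]
  rw [show ∑ i : Fin n, F ((i:ℕ)+1) = ∑ i ∈ range n, F (i+1) from
    Fin.sum_univ_eq_sum_range (fun i => F (i+1)) n]
  simp [add_comm]

private lemma aux_prod_Icc_fin (n : ℕ) (F : ℕ → ℝ) :
    ∏ j ∈ Icc 1 n, F j = ∏ i : Fin n, F ((i : ℕ) + 1) := by
  rw [← Finset.Ico_add_one_right_eq_Icc, Finset.prod_Ico_eq_prod_range]
  rw [show ∏ i : Fin n, F ((i:ℕ)+1) = ∏ i ∈ range n, F (i+1) from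
    Fin.prod_univ_eq_prod_range (fun i => F (i+1)) n]
  simp [add_comm]

private lemma aux_count_zero {n j : ℕ} (l : Nat.Partition n) (hj : j ∉ Icc 1 n) :
    l.parts.count j = 0 := by
  rw [Multiset.count_eq_zero]
  intro hmem
  exact hj (mem_Icc.2 ⟨l.parts_pos hmem,
    (Multiset.le_sum_of_mem hmem).trans_eq l.parts_sum⟩)

private lemma aux_parts_eq {n : ℕ} (l : Nat.Partition n) :
    l.parts = ∑ j ∈ Icc 1 n, Multiset.replicate (l.parts.count j) j := by
  ext k
  rw [Multiset.count_sum']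
  simp only [Multiset.count_replicate]
  rw [Finset.sum_ite_eq' (Icc 1 n) k (fun j => l.parts.count j)]
  split_ifs with h
  · rfl
  · exact aux_count_zero l h

private lemma aux_sum_counts {n : ℕ} (l : Nat.Partition n) :
    ∑ j ∈ Icc 1 n, j * l.parts.count j = n := by
  conv_rhs => rw [← l.parts_sum, aux_parts_eq l]
  rw [show (∑ j ∈ Icc 1 n, Multiset.replicate (l.parts.count j) j).sum
      = ∑ j ∈ Icc 1 n, (Multiset.replicate (l.parts.count j) j).sum from
    map_sum Multiset.sumAddMonoidHom _ _]
  simp [Multiset.sum_replicate, mul_comm]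

/-- the partition with prescribed multiplicities -/
private def buildP (n : ℕ) (m : ℕ → ℕ) (hm : ∑ j ∈ Icc 1 n, j * m j = n) :
    Nat.Partition n where
  parts := ∑ j ∈ Icc 1 n, Multiset.replicate (m j) j
  parts_pos := by
    intro i hi
    rw [Multiset.mem_sum] at hi
    obtain ⟨j, hj, hij⟩ := hi
    rw [Multiset.eq_of_mem_replicate hij]
    exact (mem_Icc.1 hj).1
  parts_sum := by
    rw [show (∑ j ∈ Icc 1 n, Multiset.replicate (m j) j).sum
        = ∑ j ∈ Icc 1 n, (Multiset.replicate (m j) j).sum from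
      map_sum Multiset.sumAddMonoidHom _ _]
    simpa [Multiset.sum_replicate, mul_comm] using hm

private lemma buildP_count (n : ℕ) (m : ℕ → ℕ) (hm : ∑ j ∈ Icc 1 n, j * m j = n)
    (k : ℕ) (hk : k ∈ Icc 1 n) : (buildP n m hm).parts.count k = m k := by
  show Multiset.count k (∑ j ∈ Icc 1 n, Multiset.replicate (m j) j) = m k
  rw [Multiset.count_sum']
  simp only [Multiset.count_replicate]
  rw [Finset.sum_ite_eq' (Icc 1 n) k m, if_pos hk]

private lemma aux_ext {n : ℕ} (l l' : Nat.Partition n)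
    (h : ∀ j ∈ Icc 1 n, l.parts.count j = l'.parts.count j) : l = l' := by
  have hp : l.parts = l'.parts := by
    rw [aux_parts_eq l, aux_parts_eq l']
    exact Finset.sum_congr rfl fun j hj => by rw [h j hj]
  cases l; cases l'; simpa using hp

/-- Fristedt's conditioning device.  For `0 < q < 1`, let `γ_1, γ_2, …` be
independent with `P(γ_j = k) = (1 - q^j) q^{jk}`.  Given nonnegative integers
`m_1, …, m_n` with `∑ j·m_j = n`, the probability that a uniformly random
partition of `n` has multiplicities `α_j = m_j` (for `1 ≤ j ≤ n`) equals the
conditional probability `P(γ_j = m_j, j ≤ n | ∑_j j·γ_j = n)`, the latter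
written as the ratio of the probability of the joint event (which forces
`γ_j = m_j` for `j ≤ n`) to the probability of the conditioning event,
both expressed through the independent geometric weights. -/
theorem stmt_14 (n : ℕ) (hn : 0 < n) (q : ℝ) (hq0 : 0 < q) (hq1 : q < 1)
    (m : ℕ → ℕ) (hm : ∑ j ∈ Finset.Icc 1 n, j * m j = n) :
    ((Finset.univ.filter fun l : Nat.Partition n =>
        ∀ j ∈ Finset.Icc 1 n, l.parts.count j = m j).card : ℝ) /
      (Fintype.card (Nat.Partition n) : ℝ)
    = (∏ j ∈ Finset.Icc 1 n, ((1 - q ^ j) * q ^ (j * m j))) /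
      (∑' γ : Fin n → ℕ,
        if ∑ i : Fin n, ((i : ℕ) + 1) * γ i = n then
          ∏ i : Fin n, ((1 - q ^ ((i : ℕ) + 1)) * q ^ (((i : ℕ) + 1) * γ i))
        else 0) := by
  set C : ℝ := (∏ j ∈ Icc 1 n, (1 - q ^ j)) * q ^ n with hC
  have hCpos : 0 < C := by
    apply mul_pos
    · refine Finset.prod_pos fun j hj => ?_
      have : q ^ j < 1 := pow_lt_one₀ hq0.le hq1
        (Nat.one_le_iff_ne_zero.mp (mem_Icc.1 hj).1)
      linarith
    · positivity
  -- Step 1: the filter is a singleton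
  have hcard1 : (Finset.univ.filter fun l : Nat.Partition n =>
      ∀ j ∈ Finset.Icc 1 n, l.parts.count j = m j).card = 1 := by
    rw [Finset.card_eq_one]
    refine ⟨buildP n m hm, ?_⟩
    ext l
    simp only [mem_filter, mem_univ, true_and, mem_singleton]
    constructor
    · intro h
      exact aux_ext _ _ fun j hj => by rw [h j hj, buildP_count n m hm j hj]
    · rintro rfl
      exact fun j hj => buildP_count n m hm j hj
  -- Step 2: numerator equals C
  have hnum : ∏ j ∈ Icc 1 n, ((1 - q ^ j) * q ^ (j * m j)) = C := by
    rw [Finset.prod_mul_distrib, Finset.prod_pow_eq_pow_sum, hm]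
  -- Step 3: the tsum
  set S : Finset (Fin n → ℕ) := Fintype.piFinset fun _ => Finset.range (n + 1) with hS
  set T : Finset (Fin n → ℕ) := S.filter (fun γ => ∑ i : Fin n, ((i : ℕ) + 1) * γ i = n)
    with hT
  have htsum : (∑' γ : Fin n → ℕ,
      if ∑ i : Fin n, ((i : ℕ) + 1) * γ i = n then
        ∏ i : Fin n, ((1 - q ^ ((i : ℕ) + 1)) * q ^ (((i : ℕ) + 1) * γ i))
      else 0) = T.card * C := by
    rw [tsum_eq_sum (s := T) ?_]
    · rw [Finset.sum_congr rfl (g := fun _ => C) ?_]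
      · rw [Finset.sum_const, nsmul_eq_mul]
      · intro γ hγ
        rw [mem_filter] at hγ
        rw [if_pos hγ.2, Finset.prod_mul_distrib, Finset.prod_pow_eq_pow_sum, hγ.2,
          hC, aux_prod_Icc_fin n (fun j => 1 - q ^ j)]
    · intro γ hγ
      rw [if_neg]
      intro hcond
      apply hγ
      rw [hT, mem_filter]
      refine ⟨?_, hcond⟩
      rw [hS, Fintype.mem_piFinset]
      intro i
      rw [Finset.mem_range, Nat.lt_succ_iff]
      calc γ i ≤ ((i : ℕ) + 1) * γ i := Nat.le_mul_of_pos_left _ (Nat.succ_pos _)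
        _ ≤ ∑ i' : Fin n, ((i' : ℕ) + 1) * γ i' :=
            Finset.single_le_sum (f := fun i' : Fin n => ((i' : ℕ) + 1) * γ i')
              (fun _ _ => Nat.zero_le _) (mem_univ i)
        _ = n := hcond
  -- Step 4: T.card = number of partitions
  have hTcard : T.card = Fintype.card (Nat.Partition n) := by
    rw [Fintype.card, eq_comm]
    apply Finset.card_bij (fun l _ => fun i : Fin n => l.parts.count ((i : ℕ) + 1))
    · intro l _
      rw [hT, mem_filter]
      constructor
      · rw [hS, Fintype.mem_piFinset]
        intro i
        rw [Finset.mem_range, Nat.lt_succ_iff]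
        calc l.parts.count ((i : ℕ) + 1)
            ≤ ((i : ℕ) + 1) * l.parts.count ((i : ℕ) + 1) :=
              Nat.le_mul_of_pos_left _ (Nat.succ_pos _)
          _ ≤ ∑ j ∈ Icc 1 n, j * l.parts.count j := by
              rw [aux_sum_Icc_fin n (fun j => j * l.parts.count j)]
              exact Finset.single_le_sum
                (f := fun i' : Fin n => ((i' : ℕ) + 1) * l.parts.count ((i' : ℕ) + 1))
                (fun _ _ => Nat.zero_le _) (mem_univ i)
          _ = n := aux_sum_counts l
      · rw [← aux_sum_Icc_fin n (fun j => j * l.parts.count j)]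
        exact aux_sum_counts l
    · intro l _ l' _ h
      apply aux_ext
      intro j hj
      rw [mem_Icc] at hj
      have h1 : j - 1 < n := by omega
      have := congrFun h ⟨j - 1, h1⟩
      simpa [Nat.sub_add_cancel hj.1] using this
    · intro γ hγ
      rw [hT, mem_filter] at hγ
      have hsum : ∑ j ∈ Icc 1 n, j * (fun j => if h : j - 1 < n then γ ⟨j - 1, h⟩ else 0) j
          = n := by
        rw [aux_sum_Icc_fin n]
        refine Eq.trans (Finset.sum_congr rfl fun i _ => ?_) hγ.2
        simp [i.2]
      refine ⟨buildP n _ hsum, mem_univ _, ?_⟩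
      funext i
      rw [buildP_count n _ hsum ((i : ℕ) + 1) (by rw [mem_Icc]; omega)]
      simp [i.2]
  -- conclude
  rw [hcard1, hnum, htsum, hTcard]
  rw [Nat.cast_one]
  have hcpos : (0:ℝ) < (Fintype.card (Nat.Partition n) : ℝ) :=
    Nat.cast_pos.2 Fintype.card_pos
  rw [div_eq_div_iff hcpos.ne' (by positivity)]
  ring
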